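/- arXiv:2205.02345 — 6 statements merged into one kernel-verified Lean document; each statement's English description precedes it below -/
import Mathlib

section
/- For every integer k ≥ 5, there exist vectors u = (u_0,…,u_{k−1}) and v = (v_0,…,v_{k−1}) in ℝ^k with all entries nonnegative satisfying: (i) Σ_{i=0}^{k−1}(u_i + v_i) = 1; (ii) for every real δ with −1/2 ≤ δ ≤ 1/2, (1/2−δ)·Σ_{i=0}^{k−1} u_i + (1/2+δ)·Σ_{i=0}^{k−1} v_i + Σ_{i=0}^{k−1} u_i·(−(1/2+δ)^i(1/2−δ)^{k−i} + (1/2−δ)^i(1/2+δ)^{k−i}) + Σ_{i=0}^{k−1} v_i·(−(1/2+δ)^{i+1}(1/2−δ)^{k−1−i} + (1/2−δ)^{i+1}(1/2+δ)^{k−1−i}) = 1/2; and (iii) p′ ≥ 1 − ((k−2)/(k−1))·p_1, where p_1 = Σ_{i=0}^{k−1} u_i and p′ = (1/(k−1))·Σ_{i=0}^{k−1} i·(u_i + v_i). -/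
/-!
Put `n = k - 1`, `M = C(n, ⌊n/2⌋)` and `e_i = C(n, i - 1) - C(n, i)` for `0 ≤ i ≤ n + 1`
(`binomStep`, with `C(n, -1) = 0`). The drops `A_i = e_i⁺` vanish up to the middle of the row
and telescope to `∑ A_i = M`, with `A_0 = 0` and `A_(n+1) = 1`. Hence `u_i = α A_i` and
`v_j = β A_(j+1) + [j = n] α` with `α + β = 1 / M` satisfy
`∑ u_i g_i + ∑ v_j g_(j+1) = (1 / M) ∑ A_i g_i` for every `g`.

Since `e_(n+1-i) = -e_i`, against any `F` with `F_(n+1-i) = -F_i` the positive part `A` carries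
half of `∑ e_i F_i`, and summation by parts turns that sum into `∑ C(n, j) (F_(j+1) - F_j)`,
which the binomial theorem evaluates. For `F_i = Q^i P^(n+1-i) - P^i Q^(n+1-i)` this gives
`∑ A_i F_i = Q - P` when `P + Q = 1`, which is condition (ii); for `F_i = i - (n + 1) / 2` it
gives `2 ∑ i A_i = 2^n + (n + 1) M`, and (iii) reduces to `C(n, ⌊n/2⌋) + 2n ≤ 2^n`.
-/

open Finset

lemma two_mul_sum_posPart_mul_of_antisymm {R : Type*} [CommRing R] [LinearOrder R]
    [IsOrderedRing R] {N : ℕ} {e F : ℕ → R} (he : ∀ i ≤ N, e (N - i) = -e i)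
    (hF : ∀ i ≤ N, F (N - i) = -F i) :
    2 * ∑ i ∈ range (N + 1), (e i)⁺ * F i = ∑ i ∈ range (N + 1), e i * F i := by
  have hneg :
      ∑ i ∈ range (N + 1), (e i)⁻ * F i = -∑ i ∈ range (N + 1), (e i)⁺ * F i := by
    rw [← sum_range_reflect, ← sum_neg_distrib]
    refine sum_congr rfl fun i hi => ?_
    have hi : i ≤ N := Nat.lt_succ_iff.mp (mem_range.mp hi)
    rw [Nat.add_sub_cancel, he i hi, hF i hi, negPart_neg, mul_neg]
  calc 2 * ∑ i ∈ range (N + 1), (e i)⁺ * F i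
      = ∑ i ∈ range (N + 1), ((e i)⁺ - (e i)⁻) * F i := by
        simp only [sub_mul, sum_sub_distrib, hneg]; ring
    _ = ∑ i ∈ range (N + 1), e i * F i := by simp only [posPart_sub_negPart]

theorem Nat.choose_succ_le_of_half_le {n r : ℕ} (h : n / 2 ≤ r) :
    n.choose (r + 1) ≤ n.choose r := by
  refine Nat.le_of_mul_le_mul_right ?_ r.succ_pos
  rw [Nat.choose_succ_right_eq]
  exact Nat.mul_le_mul_left _ (by omega)

theorem Nat.choose_half_add_two_mul_le_two_pow {n : ℕ} (hn : 4 ≤ n) :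
    n.choose (n / 2) + 2 * n ≤ 2 ^ n := by
  induction n, hn using Nat.le_induction with
  | base => decide
  | succ n hn ih =>
    obtain ⟨m, hm⟩ : ∃ m, (n + 1) / 2 = m + 1 := ⟨(n + 1) / 2 - 1, by omega⟩
    rw [hm, Nat.choose_succ_succ', pow_succ]
    have := Nat.choose_le_middle m n
    have := Nat.choose_le_middle (m + 1) n
    omega

lemma Nat.cast_choose_half_ne_zero {R : Type*} [AddMonoidWithOne R] [CharZero R] (n : ℕ) :
    (n.choose (n / 2) : R) ≠ 0 :=
  Nat.cast_ne_zero.2 (Nat.choose_pos (Nat.div_le_self n 2)).ne'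

noncomputable def binomStep (n : ℕ) : ℕ → ℝ
  | 0 => -1
  | j + 1 => n.choose j - n.choose (j + 1)

namespace binomStep

variable (n : ℕ)

@[simp] lemma succ (j : ℕ) : binomStep n (j + 1) = n.choose j - n.choose (j + 1) := rfl

lemma reflect {i : ℕ} (hi : i ≤ n + 1) : binomStep n (n + 1 - i) = -binomStep n i := by
  rcases i with _ | j
  · simp [binomStep]
  rcases Nat.lt_or_ge j n with hj | hj
  · rw [show n + 1 - (j + 1) = (n - (j + 1)) + 1 by omega, binomStep, binomStep,
      show n - (j + 1) + 1 = n - j by omega, Nat.choose_symm hj.le, Nat.choose_symm hj]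
    ring
  · obtain rfl : j = n := by omega
    simp [binomStep]

lemma sum_mul_eq_sum_choose_mul_sub (h : ℕ → ℝ) :
    ∑ i ∈ range (n + 2), binomStep n i * h i
      = ∑ j ∈ range (n + 1), n.choose j * (h (j + 1) - h j) := by
  have hshift : ∑ j ∈ range (n + 1), (n.choose (j + 1) : ℝ) * h (j + 1)
      = ∑ j ∈ range (n + 1), n.choose j * h j - h 0 := by
    have := sum_range_succ' (fun i => (n.choose i : ℝ) * h i) (n + 1)
    rw [sum_range_succ, Nat.choose_succ_self] at this
    simp only [CharP.cast_eq_zero, zero_mul, add_zero, Nat.choose_zero_right, Nat.cast_one,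
      one_mul] at this
    linarith
  rw [sum_range_succ']
  simp only [binomStep, sub_mul, sum_sub_distrib, hshift, mul_sub]
  ring

lemma posPart_zero : (binomStep n 0)⁺ = 0 := by simp [binomStep]

lemma posPart_last : (binomStep n (n + 1))⁺ = 1 := by simp [binomStep]

lemma sum_posPart : ∑ i ∈ range (n + 2), (binomStep n i)⁺ = n.choose (n / 2) := by
  set c : ℕ → ℝ := fun j => n.choose (max j (n / 2))
  have hc : ∀ j, (binomStep n (j + 1))⁺ = c j - c (j + 1) := by
    intro j
    rw [succ]
    rcases Nat.lt_or_ge j (n / 2) with hj | hj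
    · rw [posPart_eq_zero.mpr (sub_nonpos.mpr (mod_cast Nat.choose_le_succ_of_lt_half_left hj))]
      simp only [c, max_eq_right hj.le, max_eq_right (Nat.succ_le_of_lt hj), sub_self]
    · rw [posPart_eq_self.mpr (sub_nonneg.mpr (mod_cast Nat.choose_succ_le_of_half_le hj))]
      simp only [c, max_eq_left hj, max_eq_left (hj.trans j.le_succ)]
  rw [sum_range_succ', posPart_zero, add_zero]
  simp only [hc, sum_range_sub']
  simp [c, Nat.choose_eq_zero_of_lt]

lemma sum_posPart_mul_pow_sub (P Q : ℝ) :
    ∑ i ∈ range (n + 2),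
        (binomStep n i)⁺ * (Q ^ i * P ^ (n + 1 - i) - P ^ i * Q ^ (n + 1 - i))
      = (Q - P) * (P + Q) ^ n := by
  have key := two_mul_sum_posPart_mul_of_antisymm (N := n + 1) (fun _ => reflect n)
    (F := fun i => Q ^ i * P ^ (n + 1 - i) - P ^ i * Q ^ (n + 1 - i)) fun i hi => by
      simp only [Nat.sub_sub_self hi]; ring
  have hstep : ∀ j ∈ range (n + 1), (n.choose j : ℝ) * ((Q ^ (j + 1) * P ^ (n + 1 - (j + 1))
      - P ^ (j + 1) * Q ^ (n + 1 - (j + 1))) - (Q ^ j * P ^ (n + 1 - j) - P ^ j * Q ^ (n + 1 - j)))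
      = (Q - P) * (P ^ j * Q ^ (n - j) * n.choose j + Q ^ j * P ^ (n - j) * n.choose j) := by
    intro j hj
    rw [Nat.add_sub_add_right, show n + 1 - j = n - j + 1 by grind, pow_succ, pow_succ]
    ring
  rw [show n + 1 + 1 = n + 2 from rfl, sum_mul_eq_sum_choose_mul_sub, sum_congr rfl hstep,
    ← Finset.mul_sum, sum_add_distrib, ← add_pow, ← add_pow, add_comm Q P] at key
  linarith

lemma two_mul_sum_posPart_mul_id :
    2 * ∑ i ∈ range (n + 2), (binomStep n i)⁺ * i = 2 ^ n + (n + 1) * n.choose (n / 2) := by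
  have key := two_mul_sum_posPart_mul_of_antisymm (N := n + 1) (fun _ => reflect n)
    (F := fun i => (i : ℝ) - (n + 1) / 2) fun i hi => by
      push_cast [Nat.cast_sub hi]; ring
  rw [show n + 1 + 1 = n + 2 from rfl, sum_mul_eq_sum_choose_mul_sub] at key
  have hstep : ∀ j : ℕ, ((j + 1 : ℕ) : ℝ) - (n + 1) / 2 - ((j : ℝ) - (n + 1) / 2) = 1 :=
    fun j => by push_cast; ring
  simp only [hstep, mul_one, mul_sub, sum_sub_distrib, ← Finset.sum_mul, sum_posPart] at key
  rw [← Nat.cast_sum, Nat.sum_range_choose] at key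
  push_cast at key
  linarith

end binomStep

lemma sum_mul_add_sum_mul_succ {R : Type*} [CommRing R] {A u v : ℕ → R} {n : ℕ} {α β : R}
    (h0 : A 0 = 0) (hlast : A (n + 1) = 1) (hu : ∀ i, u i = α * A i)
    (hv : ∀ j, v j = β * A (j + 1) + if j = n then α else 0) (g : ℕ → R) :
    ∑ i ∈ range (n + 1), u i * g i + ∑ j ∈ range (n + 1), v j * g (j + 1)
      = (α + β) * ∑ i ∈ range (n + 2), A i * g i := by
  have hlow := sum_range_succ (fun i => A i * g i) (n + 1)
  have hhigh := sum_range_succ' (fun i => A i * g i) (n + 1)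
  rw [h0, zero_mul, add_zero] at hhigh
  rw [hlast, one_mul] at hlow
  simp only [hu, hv, add_mul, sum_add_distrib, ite_mul, zero_mul, sum_ite_eq', mem_range,
    lt_add_iff_pos_right, zero_lt_one, if_true, mul_assoc, ← mul_sum, ← hhigh, hlow]
  ring

def PairsWithBinomStep (n : ℕ) (u v : ℕ → ℝ) : Prop :=
  ∀ g : ℕ → ℝ, ∑ i ∈ range (n + 1), u i * g i + ∑ j ∈ range (n + 1), v j * g (j + 1)
    = 1 / n.choose (n / 2) * ∑ i ∈ range (n + 2), (binomStep n i)⁺ * g i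

namespace PairsWithBinomStep

variable {n : ℕ} {u v : ℕ → ℝ}

lemma sum_add_sum (h : PairsWithBinomStep n u v) :
    ∑ i ∈ range (n + 1), u i + ∑ j ∈ range (n + 1), v j = 1 := by
  have hM0 := Nat.cast_choose_half_ne_zero (R := ℝ) n
  simpa only [mul_one, binomStep.sum_posPart, one_div_mul_cancel hM0] using h fun _ => 1

lemma sum_index_mul (h : PairsWithBinomStep n u v)
    (hu : ∑ i ∈ range (n + 1), u i = 1 / 2 - 1 / n.choose (n / 2)) :
    ∑ i ∈ range (n + 1), (i : ℝ) * (u i + v i)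
      = (2 ^ n / n.choose (n / 2) + n) / 2 - 1 / n.choose (n / 2) := by
  have hM0 := Nat.cast_choose_half_ne_zero (R := ℝ) n
  have hv : ∑ j ∈ range (n + 1), v j = 1 - (1 / 2 - 1 / n.choose (n / 2)) := by
    linarith [h.sum_add_sum]
  calc ∑ i ∈ range (n + 1), (i : ℝ) * (u i + v i)
      = ∑ i ∈ range (n + 1), u i * i + ∑ j ∈ range (n + 1), v j * ((j + 1 : ℕ) : ℝ)
        - ∑ j ∈ range (n + 1), v j := by
        rw [← sum_add_distrib, ← sum_sub_distrib]
        exact sum_congr rfl fun _ _ => by push_cast; ring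
    _ = (2 ^ n / n.choose (n / 2) + n) / 2 - 1 / n.choose (n / 2) := by
        rw [h fun i => (i : ℝ), hv]
        field_simp
        linear_combination binomStep.two_mul_sum_posPart_mul_id n

end PairsWithBinomStep

theorem exists_pairsWithBinomStep (n : ℕ) (hn : 2 ≤ n) :
    ∃ u v : ℕ → ℝ, (∀ i, 0 ≤ u i) ∧ (∀ j, 0 ≤ v j) ∧
      ∑ i ∈ range (n + 1), u i = 1 / 2 - 1 / n.choose (n / 2) ∧ PairsWithBinomStep n u v := by
  have hA : ∑ i ∈ range (n + 1), (binomStep n i)⁺ = n.choose (n / 2) - 1 := by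
    rw [← binomStep.sum_posPart n, sum_range_succ _ (n + 1), binomStep.posPart_last,
      add_sub_cancel_right]
  have hM : (2 : ℝ) ≤ n.choose (n / 2) := by
    exact_mod_cast hn.trans (n.choose_one_right ▸ Nat.choose_le_middle 1 n)
  set M : ℝ := (n.choose (n / 2) : ℝ)
  -- `α + β = 1 / M` gives the pairing, and `α * (M - 1) = 1 / 2 - 1 / M` the total of `u`.
  set α := (M - 2) / (2 * M * (M - 1)) with hα_def
  set β := 1 / (2 * (M - 1)) with hβ_def
  have hM1 : M - 1 ≠ 0 := by linarith
  have hα : 0 ≤ α := div_nonneg (by linarith) (by nlinarith)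
  have hβ : 0 ≤ β := div_nonneg zero_le_one (by linarith)
  refine ⟨fun i => α * (binomStep n i)⁺,
    fun j => β * (binomStep n (j + 1))⁺ + if j = n then α else 0,
    fun i => mul_nonneg hα (posPart_nonneg _),
    fun j => add_nonneg (mul_nonneg hβ (posPart_nonneg _)) (by split_ifs <;> simp [hα]), ?_,
    fun g => ?_⟩
  · rw [← mul_sum, hA, hα_def]
    field_simp
  · rw [sum_mul_add_sum_mul_succ (A := fun i => (binomStep n i)⁺) (binomStep.posPart_zero n)
      (binomStep.posPart_last n) (fun _ => rfl) (fun _ => rfl)]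
    show _ = 1 / M * _
    congr 1
    rw [hα_def, hβ_def]
    field_simp
    ring

theorem stmt_1 (k : ℕ) (hk : 5 ≤ k) :
    ∃ u v : Fin k → ℝ,
      (∀ i, 0 ≤ u i) ∧ (∀ i, 0 ≤ v i) ∧
      (∑ i, (u i + v i)) = 1 ∧
      (∀ δ : ℝ, -(1/2) ≤ δ → δ ≤ 1/2 →
        (1/2 - δ) * (∑ i, u i) + (1/2 + δ) * (∑ i, v i)
        + (∑ i : Fin k, u i * (-((1/2 + δ) ^ (i : ℕ)) * (1/2 - δ) ^ (k - (i : ℕ))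
            + (1/2 - δ) ^ (i : ℕ) * (1/2 + δ) ^ (k - (i : ℕ))))
        + (∑ i : Fin k, v i * (-((1/2 + δ) ^ ((i : ℕ) + 1)) * (1/2 - δ) ^ (k - 1 - (i : ℕ))
            + (1/2 - δ) ^ ((i : ℕ) + 1) * (1/2 + δ) ^ (k - 1 - (i : ℕ))))
        = 1/2) ∧
      (1 / ((k : ℝ) - 1)) * (∑ i : Fin k, ((i : ℕ) : ℝ) * (u i + v i))
        ≥ 1 - (((k : ℝ) - 2) / ((k : ℝ) - 1)) * (∑ i, u i) := by
  obtain ⟨n, rfl⟩ : ∃ n, k = n + 1 := ⟨k - 1, by omega⟩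
  obtain ⟨u, v, hu, hv, hsum_u, hpair⟩ := exists_pairsWithBinomStep n (by omega)
  have hmass := hpair.sum_add_sum
  refine ⟨fun i => u i, fun j => v j, fun i => hu i, fun j => hv j, ?_, fun δ _ _ => ?_, ?_⟩
  · rw [sum_add_distrib]
    simpa only [Finset.sum_range] using hmass
  · have hg := hpair fun i =>
      (1/2 - δ) ^ i * (1/2 + δ) ^ (n + 1 - i) - (1/2 + δ) ^ i * (1/2 - δ) ^ (n + 1 - i)
    rw [binomStep.sum_posPart_mul_pow_sub] at hg
    simp only [Finset.sum_range, Nat.add_sub_add_right] at hg hmass hsum_u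
    simp only [neg_mul, neg_add_eq_sub, Nat.add_sub_cancel]
    linear_combination hg + (-2 * δ) * hsum_u + (1/2 + δ) * hmass
  · have hM : (n.choose (n / 2) : ℝ) + 2 * n ≤ 2 ^ n :=
      mod_cast Nat.choose_half_add_two_mul_le_two_pow (by omega)
    rw [Fin.sum_univ_eq_sum_range (fun i => (i : ℝ) * (u i + v i)), Fin.sum_univ_eq_sum_range u,
      hpair.sum_index_mul hsum_u, hsum_u, ge_iff_le, ← sub_nonneg]
    push_cast
    rw [add_sub_cancel_right]
    have hn : (n : ℝ) ≠ 0 := Nat.cast_ne_zero.2 (by omega)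
    have hM0 := Nat.cast_choose_half_ne_zero (R := ℝ) n
    refine le_of_le_of_eq (div_nonneg (sub_nonneg.2 hM)
      (by positivity : (0 : ℝ) ≤ 2 * n.choose (n / 2) * n)) ?_
    field_simp
    ring
end

section
/- For every integer k ≥ 2 and all reals μ_1, μ′ ∈ [−1,1]: there exists a distribution D on {−1,1}^k with Σ_x D(x)·MON_k(x) = 1 whose marginal vector equals (μ_1, μ′, μ′, …, μ′) if and only if μ_1·(k−2) + μ′·(k−1) ≥ 1. -/
/-!
Write `S(x) = (k-2)x_1 + x_2 + ⋯ + x_k`, so that `MON_k = sign ∘ S` and, by linearity,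
`E_D[S] = (k-2)μ_1 + (k-1)μ'`. If `E_D[MON_k] = 1`, then `D` is supported on `{S > 0}`; since `S`
is integer-valued, `S ≥ 1` there, whence `E_D[S] ≥ 1`.

Conversely, for `k = n + 2` mix the point `(-1,1,…,1)` with weight `(1-μ_1)/2`, each of the `n + 1`
points that are `+1` exactly at coordinate `1` and one other coordinate with weight `(1-μ')/(2n)`,
and `(1,…,1)` with the remaining mass, which is nonnegative exactly when `nμ_1 + (n+1)μ' ≥ 1`.
All these points have `S > 0`.
-/

/-- sign(z) = 1 if z > 0 and 0 otherwise. -/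
noncomputable def Rsign (z : ℝ) : ℝ := if 0 < z then 1 else 0

/-- Encoding of {-1,1}: `true ↦ 1`, `false ↦ -1`. -/
def pm (b : Bool) : ℝ := if b then 1 else -1

/-- The monarchy function MON_k(x) = sign((k-2)·x_1 + x_2 + ⋯ + x_k). -/
noncomputable def MON (k : ℕ) (x : Fin k → Bool) : ℝ :=
  Rsign (∑ i : Fin k, (if (i : ℕ) = 0 then (k : ℝ) - 2 else 1) * pm (x i))

/-- `D` is a probability distribution on {-1,1}^k. -/
def IsDist {k : ℕ} (D : (Fin k → Bool) → ℝ) : Prop :=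
  (∀ x, 0 ≤ D x) ∧ (∑ x, D x) = 1

/-- The i-th marginal of `D`: Σ_x D(x)·x_i. -/
noncomputable def marg {k : ℕ} (D : (Fin k → Bool) → ℝ) (i : Fin k) : ℝ :=
  ∑ x, D x * pm (x i)

noncomputable def monSum (k : ℕ) (x : Fin k → Bool) : ℝ :=
  ∑ i : Fin k, (if (i : ℕ) = 0 then (k : ℝ) - 2 else 1) * pm (x i)

lemma Rsign_le_one (z : ℝ) : Rsign z ≤ 1 := by
  unfold Rsign; split_ifs <;> norm_num

lemma Rsign_eq_one_iff {z : ℝ} : Rsign z = 1 ↔ 0 < z := by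
  unfold Rsign; split_ifs <;> simp [*]

lemma MON_eq_one_iff {k : ℕ} {x : Fin k → Bool} : MON k x = 1 ↔ 0 < monSum k x :=
  Rsign_eq_one_iff

lemma sum_ite_val_eq_zero {k : ℕ} (hk : 0 < k) (u v : ℝ) :
    ∑ i : Fin k, (if (i : ℕ) = 0 then u else v) = u + ((k : ℝ) - 1) * v := by
  obtain ⟨m, rfl⟩ := Nat.exists_eq_add_of_lt hk
  simp [Fin.sum_univ_succ]

lemma IsDist.eq_one_of_sum_mul_eq_one {k : ℕ} {D : (Fin k → Bool) → ℝ} (hD : IsDist D)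
    {f : (Fin k → Bool) → ℝ} (hf : ∀ x, f x ≤ 1) (h : ∑ x, D x * f x = 1)
    {x : Fin k → Bool} (hx : D x ≠ 0) : f x = 1 := by
  have hsum : ∑ y, D y * (1 - f y) = 0 := by
    simp only [mul_sub, mul_one, Finset.sum_sub_distrib, hD.2, h, sub_self]
  have hterm := (Finset.sum_eq_zero_iff_of_nonneg fun y _ =>
    mul_nonneg (hD.1 y) (sub_nonneg.2 (hf y))).1 hsum x (Finset.mem_univ x)
  linarith [(mul_eq_zero.1 hterm).resolve_left hx]

lemma one_le_sum_intCast_mul_pm {ι : Type*} [Fintype ι] (c : ι → ℤ) (x : ι → Bool)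
    (h : 0 < ∑ i, (c i : ℝ) * pm (x i)) : 1 ≤ ∑ i, (c i : ℝ) * pm (x i) := by
  have hint : ∑ i, (c i : ℝ) * pm (x i) = ((∑ i, c i * if x i then 1 else -1 : ℤ) : ℝ) := by
    push_cast [pm]; rfl
  rw [hint] at h ⊢
  exact_mod_cast (Int.cast_pos.1 h : (0 : ℤ) < _)

lemma one_le_monSum {k : ℕ} {x : Fin k → Bool} (h : MON k x = 1) : 1 ≤ monSum k x := by
  have hint : monSum k x =
      ∑ i : Fin k, ((if (i : ℕ) = 0 then (k : ℤ) - 2 else 1 : ℤ) : ℝ) * pm (x i) := by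
    push_cast; rfl
  rw [MON_eq_one_iff, hint] at h
  rw [hint]
  exact one_le_sum_intCast_mul_pm _ x h

lemma sum_mul_monSum {k : ℕ} (D : (Fin k → Bool) → ℝ) :
    ∑ x, D x * monSum k x = ∑ i : Fin k, (if (i : ℕ) = 0 then (k : ℝ) - 2 else 1) * marg D i := by
  simp only [monSum, marg, Finset.mul_sum]
  rw [Finset.sum_comm]
  exact Finset.sum_congr rfl fun i _ => Finset.sum_congr rfl fun x _ => by ring

theorem one_le_of_sum_mul_MON_eq_one {k : ℕ} (hk : 0 < k) {μ₁ μ' : ℝ}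
    {D : (Fin k → Bool) → ℝ} (hD : IsDist D) (hMON : ∑ x, D x * MON k x = 1)
    (hmarg : ∀ i : Fin k, marg D i = if (i : ℕ) = 0 then μ₁ else μ') :
    1 ≤ μ₁ * ((k : ℝ) - 2) + μ' * ((k : ℝ) - 1) := by
  have hpoint : ∀ x, D x ≤ D x * monSum k x := fun x => by
    rcases eq_or_ne (D x) 0 with h | h
    · simp [h]
    · exact le_mul_of_one_le_right (hD.1 x) <| one_le_monSum <|
        hD.eq_one_of_sum_mul_eq_one (fun _ => Rsign_le_one _) hMON h
  calc 1 = ∑ x, D x := hD.2.symm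
    _ ≤ ∑ x, D x * monSum k x := Finset.sum_le_sum fun x _ => hpoint x
    _ = ∑ i : Fin k, (if (i : ℕ) = 0 then ((k : ℝ) - 2) * μ₁ else μ') := by
      rw [sum_mul_monSum]
      refine Finset.sum_congr rfl fun i _ => ?_
      rw [hmarg]
      split_ifs <;> ring
    _ = _ := by rw [sum_ite_val_eq_zero hk]; ring

section Mixture

variable {α ι : Type*} [Fintype α] [DecidableEq α] [Fintype ι]

def mixture (ω : ι → ℝ) (P : ι → α) (x : α) : ℝ :=
  ∑ t, if x = P t then ω t else 0

lemma sum_mixture_mul (ω : ι → ℝ) (P : ι → α) (f : α → ℝ) :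
    ∑ x, mixture ω P x * f x = ∑ t, ω t * f (P t) := by
  simp only [mixture, Finset.sum_mul]
  rw [Finset.sum_comm]
  simp [ite_mul]

end Mixture

lemma isDist_mixture {k : ℕ} {ι : Type*} [Fintype ι] {ω : ι → ℝ} (hω : ∀ t, 0 ≤ ω t)
    (h1 : ∑ t, ω t = 1) (P : ι → Fin k → Bool) : IsDist (mixture ω P) :=
  ⟨fun x => Finset.sum_nonneg fun t _ => by split_ifs; exacts [hω t, le_rfl],
    by simpa [h1] using sum_mixture_mul ω P 1⟩

lemma monSum_add_two {n : ℕ} (x : Fin (n + 2) → Bool) :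
    monSum (n + 2) x = n * pm (x 0) + ∑ j : Fin (n + 1), pm (x j.succ) := by
  simp [monSum, Fin.sum_univ_succ (n := n + 1)]

lemma sum_pm_decide_eq (m : ℕ) (i : Fin m) : ∑ j : Fin m, pm (decide (j = i)) = 2 - m := by
  have h : ∀ j : Fin m, pm (decide (j = i)) = 2 * (if j = i then 1 else 0) - 1 := fun j => by
    by_cases hij : j = i <;> simp [pm, hij]; norm_num
  simp only [h, Finset.sum_sub_distrib, ← Finset.mul_sum, Finset.sum_ite_eq', Finset.mem_univ]
  simp

section Witness

variable {n : ℕ}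

def flipKing : Fin (n + 2) → Bool := Fin.cons false fun _ => true

def allTrue : Fin (n + 2) → Bool := fun _ => true

def kingAnd (j : Fin (n + 1)) : Fin (n + 2) → Bool := Fin.cons true fun i => decide (j = i)

lemma MON_flipKing : MON (n + 2) flipKing = 1 := by
  rw [MON_eq_one_iff, monSum_add_two]
  simp [flipKing, pm]

lemma MON_allTrue : MON (n + 2) allTrue = 1 := by
  rw [MON_eq_one_iff, monSum_add_two]
  simp [allTrue, pm]
  positivity

lemma MON_kingAnd (j : Fin (n + 1)) : MON (n + 2) (kingAnd j) = 1 := by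
  rw [MON_eq_one_iff, monSum_add_two]
  simp only [kingAnd, Fin.cons_zero, Fin.cons_succ, eq_comm (a := j), sum_pm_decide_eq]
  norm_num [pm]
  linarith

end Witness

lemma exists_mixture_weights {n : ℕ} {μ₁ μ' : ℝ} (h1 : -1 ≤ μ₁) (h1' : μ₁ ≤ 1) (h2' : μ' ≤ 1)
    (h : 1 ≤ n * μ₁ + (n + 1) * μ') :
    ∃ a b w : ℝ, 0 ≤ a ∧ 0 ≤ b ∧ 0 ≤ w ∧ a + b + (n + 1) * w = 1 ∧
      2 * a = 1 - μ₁ ∧ 2 * n * w = 1 - μ' := by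
  -- for `n = 0` this `w` is `0`, as it must be: then `μ' = 1`
  set w := (1 - μ') / (2 * n) with hw_def
  have hw : 2 * n * w = 1 - μ' := by
    rcases eq_or_ne n 0 with rfl | hn
    · simp at h ⊢; linarith
    · rw [hw_def]; field_simp
  refine ⟨(1 - μ₁) / 2, 1 - (1 - μ₁) / 2 - (n + 1) * w, w, by linarith, ?_,
    div_nonneg (by linarith) (by positivity), by ring, by ring, hw⟩
  have h2b : 2 * n * (1 - (1 - μ₁) / 2 - (n + 1) * w) = n * μ₁ + (n + 1) * μ' - 1 := by
    linear_combination (-(n + 1) : ℝ) * hw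
  rcases eq_or_ne n 0 with rfl | hn
  · simp [hw_def]; linarith
  · have : 0 < (n : ℝ) := by positivity
    nlinarith

theorem exists_isDist_of_one_le {n : ℕ} {μ₁ μ' : ℝ} (h1 : -1 ≤ μ₁) (h1' : μ₁ ≤ 1)
    (h2' : μ' ≤ 1) (h : 1 ≤ n * μ₁ + (n + 1) * μ') :
    ∃ D : (Fin (n + 2) → Bool) → ℝ, IsDist D ∧ (∑ x, D x * MON (n + 2) x) = 1 ∧
      ∀ i : Fin (n + 2), marg D i = if (i : ℕ) = 0 then μ₁ else μ' := by
  obtain ⟨a, b, w, ha, hb, hw, hsum, ha_eq, hw_eq⟩ := exists_mixture_weights h1 h1' h2' h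
  let ω : Fin (n + 3) → ℝ := Fin.cons a (Fin.cons b fun _ => w)
  let P : Fin (n + 3) → Fin (n + 2) → Bool := Fin.cons flipKing (Fin.cons allTrue kingAnd)
  have hmix : ∀ f : (Fin (n + 2) → Bool) → ℝ, ∑ x, mixture ω P x * f x =
      a * f flipKing + b * f allTrue + w * ∑ j, f (kingAnd j) := fun f => by
    rw [sum_mixture_mul, Fin.sum_univ_succ, Fin.sum_univ_succ]
    simp [ω, P, Finset.mul_sum, add_assoc]
  refine ⟨mixture ω P, isDist_mixture (Fin.cases ha (Fin.cases hb fun _ => hw)) ?sum_eq_one P,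
    ?MON_eq_one, Fin.cases ?marg_zero fun i => ?marg_succ⟩
  case sum_eq_one =>
    rw [Fin.sum_univ_succ, Fin.sum_univ_succ]
    simp [ω]
    linarith
  case MON_eq_one =>
    rw [hmix]
    simp [MON_flipKing, MON_allTrue, MON_kingAnd]
    linarith
  case marg_zero =>
    rw [marg, hmix]
    simp [flipKing, allTrue, kingAnd, pm]
    linarith
  case marg_succ =>
    rw [marg, hmix]
    simp only [flipKing, allTrue, kingAnd, Fin.cons_succ, sum_pm_decide_eq]
    simp [pm]
    linarith

theorem stmt_3_general (k : ℕ) (hk : 2 ≤ k) (μ₁ μ' : ℝ)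
    (h1 : -1 ≤ μ₁) (h1' : μ₁ ≤ 1) (h2' : μ' ≤ 1) :
    (∃ D : (Fin k → Bool) → ℝ, IsDist D ∧ (∑ x, D x * MON k x) = 1 ∧
      (∀ i : Fin k, marg D i = if (i : ℕ) = 0 then μ₁ else μ')) ↔
    μ₁ * ((k : ℝ) - 2) + μ' * ((k : ℝ) - 1) ≥ 1 := by
  refine ⟨fun ⟨D, hD, hMON, hmarg⟩ => one_le_of_sum_mul_MON_eq_one (by omega) hD hMON hmarg,
    fun h => ?_⟩
  obtain ⟨n, rfl⟩ := Nat.exists_eq_add_of_le' hk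
  refine exists_isDist_of_one_le h1 h1' h2' ?_
  push_cast at h
  linarith

theorem stmt_3 (k : ℕ) (hk : 2 ≤ k) (μ₁ μ' : ℝ)
    (h1 : -1 ≤ μ₁) (h1' : μ₁ ≤ 1) (h2 : -1 ≤ μ') (h2' : μ' ≤ 1) :
    (∃ D : (Fin k → Bool) → ℝ, IsDist D ∧ (∑ x, D x * MON k x) = 1 ∧
      (∀ i : Fin k, marg D i = if (i : ℕ) = 0 then μ₁ else μ')) ↔
    μ₁ * ((k : ℝ) - 2) + μ' * ((k : ℝ) - 1) ≥ 1 :=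
  stmt_3_general k hk μ₁ μ' h1 h1' h2'
end

section
/- For every integer k ≥ 2 and all reals γ, β: K^Y_γ(MON_k) ∩ K^N_β(MON_k) = ∅ if and only if K̃^Y_γ(MON_k) ∩ K̃^N_β(MON_k) = ∅, where K̃^Y_γ(MON_k) = {(μ_1,μ′) ∈ ℝ² : (μ_1,μ′,μ′,…,μ′) ∈ K^Y_γ(MON_k)} and K̃^N_β(MON_k) = {(μ_1,μ′) ∈ ℝ² : (μ_1,μ′,μ′,…,μ′) ∈ K^N_β(MON_k)}. -/
/-- E_{a ~ Bern(p)^k}[g(b ⊙ a)], where `a i = true` means a_i = 1 (prob. p). -/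
noncomputable def bern {k : ℕ} (p : ℝ) (b : Fin k → Bool) (g : (Fin k → Bool) → ℝ) : ℝ :=
  ∑ a : Fin k → Bool, (∏ i, if a i then p else 1 - p) * g (fun i => b i == a i)

/-- K^Y_γ(MON_k): marginal vectors of distributions supported (in expectation ≥ γ)
on satisfying assignments of MON_k. -/
def KY (k : ℕ) (γ : ℝ) : Set (Fin k → ℝ) :=
  {μ | ∃ D : (Fin k → Bool) → ℝ, IsDist D ∧ γ ≤ (∑ x, D x * MON k x) ∧
    ∀ i, μ i = marg D i}

/-- K^N_β(MON_k). -/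
def KN (k : ℕ) (β : ℝ) : Set (Fin k → ℝ) :=
  {μ | ∃ D : (Fin k → Bool) → ℝ, IsDist D ∧
    (∀ p : ℝ, 0 ≤ p → p ≤ 1 → (∑ b, D b * bern p b (MON k)) ≤ β) ∧
    ∀ i, μ i = marg D i}

open Finset Equiv

section Symmetrization

variable {ι : Type*} (G : Subgroup (Perm ι)) [Fintype G]

noncomputable def orbitMean (μ : ι → ℝ) (i : ι) : ℝ :=
  (Fintype.card G : ℝ)⁻¹ * ∑ g : G, μ ((g : Perm ι) i)

theorem orbitMean_apply_perm (μ : ι → ℝ) {σ : Perm ι} (hσ : σ ∈ G) (i : ι) :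
    orbitMean G μ (σ i) = orbitMean G μ i := by
  unfold orbitMean
  congr 1
  exact Fintype.sum_equiv (Equiv.mulRight ⟨σ, hσ⟩) _ _ fun _ => rfl

variable [Fintype ι] [DecidableEq ι]

theorem sum_comp_perm {M : Type*} [AddCommMonoid M] (π : Perm ι) (F : (ι → Bool) → M) :
    ∑ x, F (x ∘ π) = ∑ x, F x :=
  Fintype.sum_equiv (π.symm.arrowCongr (Equiv.refl Bool)) _ _ fun _ => rfl

noncomputable def symmetrize (D : (ι → Bool) → ℝ) (x : ι → Bool) : ℝ :=
  (Fintype.card G : ℝ)⁻¹ * ∑ g : G, D (x ∘ (g : Perm ι))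

theorem sum_symmetrize_mul (D F : (ι → Bool) → ℝ)
    (hF : ∀ g ∈ G, ∀ x, F (x ∘ (g : Perm ι)) = F x) :
    ∑ x, symmetrize G D x * F x = ∑ x, D x * F x := by
  have hcard : (Fintype.card G : ℝ) ≠ 0 := Nat.cast_ne_zero.2 Fintype.card_ne_zero
  calc ∑ x, symmetrize G D x * F x
      = (Fintype.card G : ℝ)⁻¹ * ∑ g : G, ∑ x, D (x ∘ (g : Perm ι)) * F (x ∘ (g : Perm ι)) := by
        simp only [symmetrize, mul_assoc, sum_mul, ← mul_sum]
        rw [sum_comm]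
        simp only [hF _ (SetLike.coe_mem _)]
    _ = ∑ x, D x * F x := by
        simp only [sum_comp_perm (F := fun x => D x * F x), sum_const, card_univ, nsmul_eq_mul,
          ← mul_assoc, inv_mul_cancel₀ hcard, one_mul]

end Symmetrization

section Monarchy

variable {k : ℕ}

theorem bern_comp_perm (p : ℝ) (π : Perm (Fin k)) (b : Fin k → Bool) (g : (Fin k → Bool) → ℝ) :
    bern p (b ∘ π) g = bern p b (fun y => g (y ∘ π)) := by
  unfold bern
  rw [← sum_comp_perm π]
  refine Fintype.sum_congr _ _ fun a => ?_
  simp only [Function.comp_apply, Equiv.prod_comp π (fun i => if a i then p else 1 - p)]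
  rfl

theorem IsDist.symmetrize {D : (Fin k → Bool) → ℝ} (hD : IsDist D) (G : Subgroup (Perm (Fin k)))
    [Fintype G] : IsDist (symmetrize G D) := by
  refine ⟨fun x => mul_nonneg (by positivity) (sum_nonneg fun g _ => hD.1 _), ?_⟩
  simpa [hD.2] using sum_symmetrize_mul G D (fun _ => 1) fun _ _ _ => rfl

theorem marg_symmetrize (G : Subgroup (Perm (Fin k))) [Fintype G] (D : (Fin k → Bool) → ℝ) :
    marg (symmetrize G D) = orbitMean G (marg D) := by
  funext i
  simp only [marg, symmetrize, orbitMean, mul_assoc, sum_mul, ← mul_sum]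
  rw [sum_comm]
  congr 1
  refine Fintype.sum_equiv (Equiv.inv G) _ _ fun g => ?_
  simpa using sum_comp_perm (g : Perm (Fin k)) fun x => D x * pm (x ((g : Perm (Fin k))⁻¹ i))

def zeroStab (k : ℕ) : Subgroup (Perm (Fin k)) where
  carrier := {π | ∀ i, ((π i : ℕ) = 0 ↔ (i : ℕ) = 0)}
  mul_mem' hσ hτ i := (hσ _).trans (hτ i)
  one_mem' _ := Iff.rfl
  inv_mem' {π} hπ i := by simpa using (hπ (π⁻¹ i)).symm

instance : DecidablePred (· ∈ zeroStab k) :=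
  fun π => inferInstanceAs (Decidable (∀ i, ((π i : ℕ) = 0 ↔ (i : ℕ) = 0)))

theorem swap_mem_zeroStab {i j : Fin k} (hi : (i : ℕ) ≠ 0) (hj : (j : ℕ) ≠ 0) :
    swap i j ∈ zeroStab k := by
  intro x
  rcases eq_or_ne x i with rfl | hxi
  · simp [hi, hj]
  rcases eq_or_ne x j with rfl | hxj
  · simp [hi, hj]
  rw [swap_apply_of_ne_of_ne hxi hxj]

theorem MON_comp_perm {π : Perm (Fin k)} (hπ : π ∈ zeroStab k) (x : Fin k → Bool) :
    MON k (x ∘ π) = MON k x := by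
  unfold MON
  congr 1
  refine Fintype.sum_equiv π _ _ fun i => ?_
  simp only [Function.comp_apply, (hπ i).symm]

theorem orbitMean_zeroStab_eq (μ : Fin k → ℝ) (i j : Fin k) (hi : (i : ℕ) ≠ 0)
    (hj : (j : ℕ) ≠ 0) :
    orbitMean (zeroStab k) μ i = orbitMean (zeroStab k) μ j := by
  simpa using (orbitMean_apply_perm _ μ (swap_mem_zeroStab hi hj) i).symm

theorem orbitMean_mem_KY {γ : ℝ} {μ : Fin k → ℝ} (hμ : μ ∈ KY k γ) :
    orbitMean (zeroStab k) μ ∈ KY k γ := by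
  obtain ⟨D, hD, hγ, hm⟩ := hμ
  obtain rfl : μ = marg D := funext hm
  refine ⟨symmetrize _ D, hD.symmetrize _, ?_, fun i => by rw [marg_symmetrize]⟩
  rwa [sum_symmetrize_mul _ _ _ fun g hg x => MON_comp_perm hg x]

theorem orbitMean_mem_KN {β : ℝ} {μ : Fin k → ℝ} (hμ : μ ∈ KN k β) :
    orbitMean (zeroStab k) μ ∈ KN k β := by
  obtain ⟨D, hD, hβ, hm⟩ := hμ
  obtain rfl : μ = marg D := funext hm
  refine ⟨symmetrize _ D, hD.symmetrize _, fun p hp0 hp1 => ?_, fun i => by rw [marg_symmetrize]⟩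
  rw [sum_symmetrize_mul _ _ _ fun g hg b => ?_]
  · exact hβ p hp0 hp1
  · simp only [bern_comp_perm, MON_comp_perm hg]

theorem exists_ite_eq_of_eq_off_zero {ν : Fin k → ℝ}
    (hν : ∀ i j : Fin k, (i : ℕ) ≠ 0 → (j : ℕ) ≠ 0 → ν i = ν j) :
    ∃ q : ℝ × ℝ, (fun i : Fin k => if (i : ℕ) = 0 then q.1 else q.2) = ν := by
  refine ⟨(if h : 0 < k then ν ⟨0, h⟩ else 0, if h : 1 < k then ν ⟨1, h⟩ else 0),
    funext fun i => ?_⟩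
  by_cases hi : (i : ℕ) = 0
  · have hk : 0 < k := hi ▸ i.isLt
    rw [if_pos hi, dif_pos hk]
    exact congrArg ν (Fin.ext hi.symm)
  · simp [hi, show 1 < k by omega, hν i ⟨1, by omega⟩ hi one_ne_zero]

end Monarchy

theorem stmt_4_general (k : ℕ) (γ β : ℝ) :
    (KY k γ ∩ KN k β = ∅) ↔
    (({q : ℝ × ℝ | (fun i : Fin k => if (i : ℕ) = 0 then q.1 else q.2) ∈ KY k γ} ∩
      {q : ℝ × ℝ | (fun i : Fin k => if (i : ℕ) = 0 then q.1 else q.2) ∈ KN k β}) = ∅) := by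
  simp only [Set.eq_empty_iff_forall_notMem]
  refine ⟨fun h q hq => h _ hq, fun h μ ⟨hY, hN⟩ => ?_⟩
  obtain ⟨q, hq⟩ := exists_ite_eq_of_eq_off_zero (orbitMean_zeroStab_eq μ)
  refine h q ⟨?_, ?_⟩ <;> rw [Set.mem_ofPred_eq, hq]
  exacts [orbitMean_mem_KY hY, orbitMean_mem_KN hN]

theorem stmt_4 (k : ℕ) (hk : 2 ≤ k) (γ β : ℝ) :
    (KY k γ ∩ KN k β = ∅) ↔
    (({q : ℝ × ℝ | (fun i : Fin k => if (i : ℕ) = 0 then q.1 else q.2) ∈ KY k γ} ∩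
      {q : ℝ × ℝ | (fun i : Fin k => if (i : ℕ) = 0 then q.1 else q.2) ∈ KN k β}) = ∅) :=
  stmt_4_general k γ β
end

section
/- Let u_0,u_1,u_2,u_3,v_0,v_1,v_2,v_3 be nonnegative reals satisfying the system: u_0 + v_0 + v_1 + v_2 = 1/2; −3u_0 + 2u_1 + u_2 − v_1 − 2v_2 + 3v_3 = 0; 6u_0 − 3u_1 + 3u_3 − 3v_0 + 3v_2 − 6v_3 = 0; −4u_0 + 2u_1 − 2u_3 + 2v_0 − 2v_2 + 4v_3 = 0; and Σ_{i=0}^{3}(u_i + v_i) = 1. Then 2μ_1 + 3μ′ ≤ 2/3, where μ_1 = Σ_{i=0}^{3}(u_i − v_i) and μ′ = Σ_{i=0}^{3}((2i/3) − 1)·(u_i + v_i). -/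
/-! The three constraints `e1`, `e2`, `e3` with multipliers `4/3`, `11/3`, `5/3` turn the
objective into `2/3 - (2/3) * (2 u₀ + 2 u₁ + u₂ + 2 v₀ + v₁)`, which is at most `2/3` by
nonnegativity; the bound is attained at `u₃ = 1/6`, `v₂ = 1/2`, `v₃ = 1/3`. -/

theorem sum_sub_add_moment_eq {n : ℕ} (u v : Fin n → ℝ) :
    2 * (∑ i, (u i - v i)) + 3 * (∑ i : Fin n, ((2 * ((i : ℕ) : ℝ) / 3) - 1) * (u i + v i))
      = ∑ i : Fin n, ((2 * ((i : ℕ) : ℝ) - 1) * u i + (2 * ((i : ℕ) : ℝ) - 5) * v i) := by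
  rw [Finset.mul_sum, Finset.mul_sum, ← Finset.sum_add_distrib]
  congr 1 with i
  ring

theorem stmt_5_general (u v : Fin 4 → ℝ)
    (hu : ∀ i, 0 ≤ u i) (hv : ∀ i, 0 ≤ v i)
    (e1 : u 0 + v 0 + v 1 + v 2 = 1/2)
    (e2 : -3 * u 0 + 2 * u 1 + u 2 - v 1 - 2 * v 2 + 3 * v 3 = 0)
    (e3 : 6 * u 0 - 3 * u 1 + 3 * u 3 - 3 * v 0 + 3 * v 2 - 6 * v 3 = 0) :
    2 * (∑ i, (u i - v i))
      + 3 * (∑ i : Fin 4, ((2 * ((i : ℕ) : ℝ) / 3) - 1) * (u i + v i)) ≤ 2/3 := by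
  rw [sum_sub_add_moment_eq, Fin.sum_univ_four]
  norm_num
  linear_combination (4/3) * e1 + (11/3) * e2 + (5/3) * e3 + (4/3) * hu 0 + (4/3) * hu 1
    + (2/3) * hu 2 + (4/3) * hv 0 + (2/3) * hv 1

theorem stmt_5 (u v : Fin 4 → ℝ)
    (hu : ∀ i, 0 ≤ u i) (hv : ∀ i, 0 ≤ v i)
    (e1 : u 0 + v 0 + v 1 + v 2 = 1/2)
    (e2 : -3 * u 0 + 2 * u 1 + u 2 - v 1 - 2 * v 2 + 3 * v 3 = 0)
    (e3 : 6 * u 0 - 3 * u 1 + 3 * u 3 - 3 * v 0 + 3 * v 2 - 6 * v 3 = 0)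
    (e4 : -4 * u 0 + 2 * u 1 - 2 * u 3 + 2 * v 0 - 2 * v 2 + 4 * v 3 = 0)
    (e5 : (∑ i, (u i + v i)) = 1) :
    2 * (∑ i, (u i - v i))
      + 3 * (∑ i : Fin 4, ((2 * ((i : ℕ) : ℝ) / 3) - 1) * (u i + v i)) ≤ 2/3 :=
  stmt_5_general u v hu hv e1 e2 e3
end

section
/- For all integers j ≥ 2 and k ≥ 2j³ + 4j² + j with k + j even: 2^{k−2} − Σ_{i=0}^{(k−j)/2 − 1} C(k−1, i) < (j+1)·C(k−2, (k−j)/2 − 1). -/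
/-!
Write `k = 2c + j + 2` and `n = k - 1`. By the symmetry of row `n`, the indices below `c + 1`
and their mirror images account for `2 ∑_{i ≤ c} C(n, i)` of `2^n`, leaving `j` central
terms, each at most `2 C(n-1, ⌊(n-1)/2⌋)` by Pascal's rule. Going from index `c` to the centre
`c + ⌊j/2⌋` of row `n - 1` multiplies `C(n-1, ·)` by at most `((c+j)/(c+1))^⌊j/2⌋`, which is
below `(j+1)/j` once `c` is of order `j³`.
-/

open Finset

namespace Nat

theorem sum_range_choose_eq_two_mul_sum_add_sum_Ico (n m : ℕ) (h : 2 * m ≤ n) :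
    2 ^ n = 2 * ∑ i ∈ range m, n.choose i + ∑ i ∈ Ico m (n + 1 - m), n.choose i := by
  have upper : ∑ i ∈ Ico (n + 1 - m) (n + 1), n.choose i = ∑ i ∈ range m, n.choose i := by
    rw [sum_Ico_eq_sum_range, show n + 1 - (n + 1 - m) = m by omega,
      ← sum_range_reflect (fun i => n.choose i) m]
    refine sum_congr rfl fun t ht => choose_symm_of_eq_add ?_
    have := mem_range.mp ht
    omega
  rw [← sum_range_choose, range_eq_Ico,
    ← sum_Ico_consecutive _ (zero_le m) (by omega : m ≤ n + 1),
    ← sum_Ico_consecutive _ (by omega : m ≤ n + 1 - m) (by omega : n + 1 - m ≤ n + 1), upper,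
    ← range_eq_Ico]
  ring

theorem choose_succ_le_two_mul_choose_half (n i : ℕ) :
    (n + 1).choose i ≤ 2 * n.choose (n / 2) := by
  rcases i with _ | i
  · simp only [choose_zero_right]
    have := choose_pos (div_le_self n 2)
    omega
  · rw [choose_succ_succ']
    have := choose_le_middle i n
    have := choose_le_middle (i + 1) n
    omega

/-- Each step `C(n, c+s) → C(n, c+s+1)` multiplies by `(n-c-s)/(c+s+1) ≤ (n-c)/(c+1)`. -/
theorem pow_mul_choose_add_le (n c t : ℕ) :
    (c + 1) ^ t * n.choose (c + t) ≤ (n - c) ^ t * n.choose c := by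
  induction t with
  | zero => simp
  | succ t ih =>
    have step : (c + 1) * n.choose (c + t + 1) ≤ (n - c) * n.choose (c + t) :=
      calc (c + 1) * n.choose (c + t + 1)
          ≤ n.choose (c + t + 1) * (c + t + 1) := by rw [mul_comm]; gcongr; omega
        _ = n.choose (c + t) * (n - (c + t)) := choose_succ_right_eq n (c + t)
        _ ≤ (n - c) * n.choose (c + t) := by rw [mul_comm]; gcongr; omega
    calc (c + 1) ^ (t + 1) * n.choose (c + (t + 1))
        = (c + 1) ^ t * ((c + 1) * n.choose (c + t + 1)) := by rw [← add_assoc]; ring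
      _ ≤ (c + 1) ^ t * ((n - c) * n.choose (c + t)) := by gcongr
      _ = (n - c) * ((c + 1) ^ t * n.choose (c + t)) := by ring
      _ ≤ (n - c) * ((n - c) ^ t * n.choose c) := by gcongr
      _ = (n - c) ^ (t + 1) * n.choose c := by ring

/-- A multiplicative form of `(1 + x)^d ≤ 1 / (1 - d x)` for `x = a / m`. -/
theorem add_pow_mul_sub_le (m a d : ℕ) : (m + a) ^ d * (m - d * a) ≤ m ^ (d + 1) := by
  induction d with
  | zero => simp [pow_one]
  | succ d ih =>
    have step : (m + a) * (m - (d + 1) * a) ≤ m * (m - d * a) := by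
      rcases le_or_gt ((d + 1) * a) m with h | h
      · obtain ⟨s, rfl⟩ := Nat.exists_eq_add_of_le h
        rw [show (d + 1) * a + s - (d + 1) * a = s by omega,
          show (d + 1) * a + s - d * a = s + a by rw [add_mul]; omega]
        nlinarith [Nat.zero_le ((d + 1) * a * a)]
      · simp [Nat.sub_eq_zero_of_le h.le]
    calc (m + a) ^ (d + 1) * (m - (d + 1) * a)
        = (m + a) ^ d * ((m + a) * (m - (d + 1) * a)) := by ring
      _ ≤ (m + a) ^ d * (m * (m - d * a)) := by gcongr
      _ = m * ((m + a) ^ d * (m - d * a)) := by ring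
      _ ≤ m * m ^ (d + 1) := by gcongr
      _ = m ^ (d + 1 + 1) := by ring

theorem mul_add_pow_lt (j m a d : ℕ) (h : (j + 1) * (d * a) < m) :
    j * (m + a) ^ d < (j + 1) * m ^ d := by
  obtain ⟨s, rfl⟩ := Nat.exists_eq_add_of_le (show d * a ≤ m by nlinarith)
  have hs : d * a + s - d * a = s := by omega
  have hsum := add_pow_mul_sub_le (d * a + s) a d
  rw [hs] at hsum
  have hjs : j * (d * a + s) < (j + 1) * s := by nlinarith
  have hpos : 0 < (d * a + s) ^ d := Nat.pow_pos (by omega)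
  refine Nat.lt_of_mul_lt_mul_right (a := s) ?_
  calc j * (d * a + s + a) ^ d * s
      = j * ((d * a + s + a) ^ d * s) := by ring
    _ ≤ j * (d * a + s) ^ (d + 1) := by gcongr
    _ = (d * a + s) ^ d * (j * (d * a + s)) := by ring
    _ < (d * a + s) ^ d * ((j + 1) * s) := by gcongr
    _ = (j + 1) * (d * a + s) ^ d * s := by ring

theorem mul_choose_middle_lt (c j : ℕ) (hj : 1 ≤ j) (hc : (j + 1) * (j / 2 * (j - 1)) < c + 1) :
    j * (2 * c + j).choose ((2 * c + j) / 2) < (j + 1) * (2 * c + j).choose c := by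
  set d := j / 2
  have hratio := pow_mul_choose_add_le (2 * c + j) c d
  rw [show 2 * c + j - c = c + 1 + (j - 1) by omega] at hratio
  have hpow := mul_add_pow_lt j (c + 1) (j - 1) d hc
  have hpos : 0 < (2 * c + j).choose c := choose_pos (by omega)
  rw [show (2 * c + j) / 2 = c + d by omega]
  refine Nat.lt_of_mul_lt_mul_left (a := (c + 1) ^ d) ?_
  calc (c + 1) ^ d * (j * (2 * c + j).choose (c + d))
      = j * ((c + 1) ^ d * (2 * c + j).choose (c + d)) := by ring
    _ ≤ j * ((c + 1 + (j - 1)) ^ d * (2 * c + j).choose c) := by gcongr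
    _ = j * (c + 1 + (j - 1)) ^ d * (2 * c + j).choose c := by ring
    _ < (j + 1) * (c + 1) ^ d * (2 * c + j).choose c := by gcongr
    _ = (c + 1) ^ d * ((j + 1) * (2 * c + j).choose c) := by ring

theorem two_pow_lt_two_mul_sum_choose_add (c j : ℕ) (hj : 1 ≤ j)
    (hc : (j + 1) * (j / 2 * (j - 1)) < c + 1) :
    2 ^ (2 * c + j + 1) < 2 * ∑ i ∈ range (c + 1), (2 * c + j + 1).choose i
      + 2 * ((j + 1) * (2 * c + j).choose c) := by
  have split := sum_range_choose_eq_two_mul_sum_add_sum_Ico (2 * c + j + 1) (c + 1) (by omega)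
  rw [show 2 * c + j + 1 + 1 - (c + 1) = c + j + 1 by omega] at split
  have middle : ∑ i ∈ Ico (c + 1) (c + j + 1), (2 * c + j + 1).choose i
      ≤ 2 * (j * (2 * c + j).choose ((2 * c + j) / 2)) :=
    calc ∑ i ∈ Ico (c + 1) (c + j + 1), (2 * c + j + 1).choose i
        ≤ #(Ico (c + 1) (c + j + 1)) • (2 * (2 * c + j).choose ((2 * c + j) / 2)) :=
          sum_le_card_nsmul _ _ _ fun i _ => choose_succ_le_two_mul_choose_half _ i
      _ = 2 * (j * (2 * c + j).choose ((2 * c + j) / 2)) := by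
          rw [card_Ico, smul_eq_mul, show c + j + 1 - (c + 1) = j by omega]; ring
  have := mul_choose_middle_lt c j hj hc
  omega

end Nat

theorem stmt_12 (j k : ℕ) (hj : 2 ≤ j) (hk : 2 * j ^ 3 + 4 * j ^ 2 + j ≤ k)
    (he : Even (k + j)) :
    (2 : ℝ) ^ (k - 2) - (∑ i ∈ Finset.range ((k - j) / 2), (Nat.choose (k - 1) i : ℝ))
      < ((j : ℝ) + 1) * (Nat.choose (k - 2) ((k - j) / 2 - 1) : ℝ) := by
  obtain ⟨c, rfl⟩ : ∃ c, k = 2 * c + j + 2 := by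
    obtain ⟨t, ht⟩ := he
    have : j + 2 ≤ k := by nlinarith
    exact ⟨(k - j) / 2 - 1, by omega⟩
  have hc : (j + 1) * (j / 2 * (j - 1)) < c + 1 := by
    obtain ⟨e, rfl⟩ : ∃ e, j = e + 1 := ⟨j - 1, by omega⟩
    have hd := Nat.mul_le_mul_left ((e + 2) * e) (Nat.div_mul_le_self (e + 1) 2)
    simp only [Nat.add_sub_cancel]
    nlinarith
  have key := Nat.two_pow_lt_two_mul_sum_choose_add c j (by omega) hc
  rw [show 2 * c + j + 2 - 2 = 2 * c + j by omega, show 2 * c + j + 2 - 1 = 2 * c + j + 1 by omega,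
    show (2 * c + j + 2 - j) / 2 = c + 1 by omega, Nat.add_sub_cancel]
  have keyR : (2 : ℝ) ^ (2 * c + j + 1)
      < 2 * ∑ i ∈ range (c + 1), ((2 * c + j + 1).choose i : ℝ) + 2 * (((j : ℝ) + 1) * (2 * c + j).choose c) := by
    exact_mod_cast key
  rw [pow_succ] at keyR
  linarith
end

section
/- For all integers j and k with 2 ≤ j < k and k + j even: 2^{k−2} − Σ_{i=0}^{(k−j)/2 − 1} C(k−1, i) ≥ j·(1 + (j−1)/(k−j))·C(k−2, (k−j)/2 − 1); in particular, the left-hand side is strictly greater than j·C(k−2, (k−j)/2 − 1). -/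
/-!
Put `m = (k - j) / 2` and `n = k - 1 = 2m + j - 1`. In the row `C(n, 0), …, C(n, n)` the first `m`
and the last `m` entries are mirror images, and each of the `j` entries in between is at least
`C(n, m)` by unimodality, so `2^n ≥ 2 ∑_{i<m} C(n, i) + j C(n, m)`. Halving, the left-hand side is at
least `j C(n, m) / 2 = j (n / 2m) C(n - 1, m - 1)`, and `n / 2m = 1 + (j - 1)/(k - j)`. The strict
bound follows since `j ≥ 2` makes `(j - 1)/(k - j)` positive.
-/

open Finset

namespace Nat

theorem choose_le_choose_of_le_of_le_half {n a b : ℕ} (hab : a ≤ b) (hb : b ≤ n / 2) :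
    n.choose a ≤ n.choose b := by
  induction b, hab using Nat.le_induction with
  | base => rfl
  | succ b _ ih => exact (ih (by omega)).trans (choose_le_succ_of_lt_half_left (by omega))

theorem choose_le_choose_of_le_of_le_sub {n m i : ℕ} (hm : m ≤ i) (hi : i ≤ n - m) :
    n.choose m ≤ n.choose i := by
  rcases le_or_gt i (n / 2) with h | h
  · exact choose_le_choose_of_le_of_le_half hm h
  · rw [← choose_symm (by omega : i ≤ n)]
    exact choose_le_choose_of_le_of_le_half (by omega) (by omega)

theorem two_mul_sum_range_choose_add_mul_choose_le {n m j : ℕ} (h : 2 * m + j = n + 1) :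
    2 * ∑ i ∈ range m, n.choose i + j * n.choose m ≤ 2 ^ n := by
  have hupper : ∑ i ∈ range m, n.choose (m + j + i) = ∑ i ∈ range m, n.choose i := by
    rw [← sum_range_reflect]
    refine sum_congr rfl fun i hi => ?_
    rw [mem_range] at hi
    rw [← choose_symm (by omega)]
    congr 1
    omega
  have hmiddle : j * n.choose m ≤ ∑ i ∈ range j, n.choose (m + i) := by
    simpa using card_nsmul_le_sum (range j) (fun i => n.choose (m + i)) (n.choose m)
      fun i hi => choose_le_choose_of_le_of_le_sub (by omega) (by simp at hi; omega)
  calc 2 * ∑ i ∈ range m, n.choose i + j * n.choose m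
      ≤ ∑ i ∈ range m, n.choose i + ∑ i ∈ range j, n.choose (m + i)
          + ∑ i ∈ range m, n.choose (m + j + i) := by rw [hupper]; omega
    _ = ∑ i ∈ range (n + 1), n.choose i := by rw [← h, ← sum_range_add, ← sum_range_add]; ring_nf
    _ = 2 ^ n := sum_range_choose n

end Nat

theorem stmt_13 (j k : ℕ) (hj : 2 ≤ j) (hk : j < k) (he : Even (k + j)) :
    ((2 : ℝ) ^ (k - 2) - (∑ i ∈ Finset.range ((k - j) / 2), (Nat.choose (k - 1) i : ℝ))
      ≥ (j : ℝ) * (1 + ((j : ℝ) - 1) / ((k : ℝ) - (j : ℝ)))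
          * (Nat.choose (k - 2) ((k - j) / 2 - 1) : ℝ)) ∧
    ((2 : ℝ) ^ (k - 2) - (∑ i ∈ Finset.range ((k - j) / 2), (Nat.choose (k - 1) i : ℝ))
      > (j : ℝ) * (Nat.choose (k - 2) ((k - j) / 2 - 1) : ℝ)) := by
  obtain ⟨m, rfl⟩ : ∃ m, k = j + 2 * m + 2 := by
    obtain ⟨t, ht⟩ := he
    exact ⟨t - j - 1, by omega⟩
  set n := j + 2 * m
  simp only [show n + 2 - 2 = n by omega, show n + 2 - 1 = n + 1 by omega,
    show (n + 2 - j) / 2 = m + 1 by omega, Nat.add_sub_cancel]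
  have htail : 2 * ∑ i ∈ range (m + 1), ((n + 1).choose i : ℝ) + j * (n + 1).choose (m + 1)
      ≤ 2 * 2 ^ n := by
    rw [← pow_succ']
    exact_mod_cast Nat.two_mul_sum_range_choose_add_mul_choose_le (by omega)
  have hpascal : ((j : ℝ) + 2 * m + 1) * n.choose m = (n + 1).choose (m + 1) * ((m : ℝ) + 1) := by
    exact_mod_cast Nat.add_one_mul_choose_eq n m
  have hgap : ((n + 2 : ℕ) : ℝ) - j = 2 * ((m : ℝ) + 1) := by
    push_cast [n]; ring
  have hrhs : (j : ℝ) * (1 + ((j : ℝ) - 1) / ((n + 2 : ℕ) - (j : ℝ))) * n.choose m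
      = j * (n + 1).choose (m + 1) / 2 := by
    rw [hgap]
    field_simp
    linear_combination hpascal
  have hgrowth :
      (j : ℝ) * n.choose m < j * (1 + ((j : ℝ) - 1) / ((n + 2 : ℕ) - (j : ℝ))) * n.choose m := by
    rw [hgap]
    have hj1 : (1 : ℝ) < j := by exact_mod_cast hj
    have hC : (0 : ℝ) < n.choose m := by exact_mod_cast Nat.choose_pos (by omega)
    have hx : 0 < ((j : ℝ) - 1) / (2 * ((m : ℝ) + 1)) := div_pos (by linarith) (by positivity)
    exact mul_lt_mul_of_pos_right (lt_mul_of_one_lt_right (by linarith) (by linarith)) hC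
  exact ⟨by linarith, by linarith⟩
end
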